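/- arXiv:2405.10876 — 2 statements merged into one kernel-verified Lean document; each statement's English description precedes it below -/
import Mathlib

section
/- For any integer n ≥ 1 and vectors x, d ∈ R^J with ‖d‖ ≤ 1: (1/(n+1))‖x + d‖^{n+1} − (1/(n+1))‖x‖^{n+1} ≤ ‖x + d‖^{n−1}⟨x, d⟩ + 2^{n−1}(‖x‖^{n−1} + 1). -/
open scoped RealInnerProductSpace

lemma aux_pow_sub_pow_le (a b : ℝ) (ha : 0 ≤ a) (hb : 0 ≤ b) (n : ℕ) :
    b ^ (n + 1) - a ^ (n + 1) ≤ (n + 1) * b ^ n * (b - a) := by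
  have key := (Commute.all b a).geom_sum₂_mul (n + 1)
  rcases le_or_gt a b with h | h
  · have hsum : (∑ i ∈ Finset.range (n + 1), b ^ i * a ^ (n - i)) ≤ (n + 1) * b ^ n := by
      calc (∑ i ∈ Finset.range (n + 1), b ^ i * a ^ (n - i))
          ≤ ∑ i ∈ Finset.range (n + 1), b ^ n := by
            apply Finset.sum_le_sum
            intro i hi
            have hi' : i < n + 1 := Finset.mem_range.mp hi
            calc b ^ i * a ^ (n - i) ≤ b ^ i * b ^ (n - i) :=
                  mul_le_mul_of_nonneg_left (pow_le_pow_left₀ ha h _) (pow_nonneg hb _)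
              _ = b ^ n := by rw [← pow_add]; congr 1; omega
        _ = (n + 1) * b ^ n := by
            rw [Finset.sum_const, Finset.card_range, nsmul_eq_mul]; push_cast; ring
    have hba : (0:ℝ) ≤ b - a := sub_nonneg.mpr h
    calc b ^ (n + 1) - a ^ (n + 1)
        = (∑ i ∈ Finset.range (n + 1), b ^ i * a ^ (n + 1 - 1 - i)) * (b - a) := key.symm
      _ ≤ (n + 1) * b ^ n * (b - a) := by
          apply mul_le_mul_of_nonneg_right _ hba
          simpa using hsum
  · have hsum : ((n:ℝ) + 1) * b ^ n ≤ (∑ i ∈ Finset.range (n + 1), b ^ i * a ^ (n - i)) := by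
      calc ((n:ℝ) + 1) * b ^ n = ∑ i ∈ Finset.range (n + 1), b ^ n := by
            rw [Finset.sum_const, Finset.card_range, nsmul_eq_mul]; push_cast; ring
        _ ≤ ∑ i ∈ Finset.range (n + 1), b ^ i * a ^ (n - i) := by
            apply Finset.sum_le_sum
            intro i hi
            have hi' : i < n + 1 := Finset.mem_range.mp hi
            calc b ^ n = b ^ i * b ^ (n - i) := by rw [← pow_add]; congr 1; omega
              _ ≤ b ^ i * a ^ (n - i) :=
                  mul_le_mul_of_nonneg_left (pow_le_pow_left₀ hb h.le _) (pow_nonneg hb _)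
    have hba : b - a < 0 := sub_neg.mpr h
    calc b ^ (n + 1) - a ^ (n + 1)
        = (∑ i ∈ Finset.range (n + 1), b ^ i * a ^ (n + 1 - 1 - i)) * (b - a) := key.symm
      _ ≤ (n + 1) * b ^ n * (b - a) := by
          apply mul_le_mul_of_nonpos_right _ hba.le
          simpa using hsum

lemma aux_add_one_pow_le (a : ℝ) (ha : 0 ≤ a) (m : ℕ) :
    (a + 1) ^ m ≤ 2 ^ m * (a ^ m + 1) := by
  rcases le_or_gt a 1 with h | h
  · have h1 : (a + 1) ^ m ≤ 2 ^ m := by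
      have h2 : (a + 1) ^ m ≤ 2 ^ m := pow_le_pow_left₀ (by linarith) (by linarith) m
      exact h2
    nlinarith [pow_nonneg ha m, pow_pos (show (0:ℝ) < 2 by norm_num) m]
  · have h1 : (a + 1) ^ m ≤ (2 * a) ^ m := pow_le_pow_left₀ (by linarith) (by linarith) m
    have h2 : (2 * a) ^ m = 2 ^ m * a ^ m := mul_pow 2 a m
    nlinarith [pow_pos (show (0:ℝ) < 2 by norm_num) m]

theorem taylor_increment_bound (J n : ℕ) (hn : 1 ≤ n)
    (x d : EuclideanSpace ℝ (Fin J)) (hd : ‖d‖ ≤ 1) :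
    (1 / (n + 1 : ℝ)) * ‖x + d‖ ^ (n + 1) - (1 / (n + 1 : ℝ)) * ‖x‖ ^ (n + 1)
      ≤ ‖x + d‖ ^ (n - 1) * ⟪x, d⟫ + 2 ^ (n - 1) * (‖x‖ ^ (n - 1) + 1) := by
  obtain ⟨m, rfl⟩ : ∃ m, n = m + 1 := ⟨n - 1, by omega⟩
  simp only [Nat.add_sub_cancel]
  set a := ‖x‖ with ha_def
  set b := ‖x + d‖ with hb_def
  have ha : 0 ≤ a := norm_nonneg _
  have hb : 0 ≤ b := norm_nonneg _
  -- Step 1: convexity bound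
  have h1 : b ^ (m + 2) - a ^ (m + 2) ≤ ((m:ℝ) + 2) * b ^ (m + 1) * (b - a) := by
    have h := aux_pow_sub_pow_le a b ha hb (m + 1)
    push_cast at h
    calc b ^ (m + 2) - a ^ (m + 2) = b ^ (m + 1 + 1) - a ^ (m + 1 + 1) := by ring_nf
      _ ≤ ((m:ℝ) + 1 + 1) * b ^ (m + 1) * (b - a) := h
      _ = ((m:ℝ) + 2) * b ^ (m + 1) * (b - a) := by ring
  -- Step 2: b * (b - a) ≤ ⟪x,d⟫ + 1
  have hcs : ⟪x, x + d⟫ ≤ a * b := real_inner_le_norm x (x + d)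
  have hbsq : b ^ 2 = ⟪x, x + d⟫ + (⟪x, d⟫ + ‖d‖ ^ 2) := by
    have e1 := real_inner_self_eq_norm_sq (x + d)
    have e2 := real_inner_self_eq_norm_sq d
    rw [hb_def, ← e1, inner_add_left, inner_add_right, inner_add_right, ← e2,
      real_inner_comm d x]
  have h2 : b * (b - a) ≤ ⟪x, d⟫ + 1 := by
    have hd2 : ‖d‖ ^ 2 ≤ 1 := by nlinarith [norm_nonneg d]
    nlinarith
  -- Step 3: b^m ≤ 2^m (a^m + 1)
  have hble : b ≤ a + 1 := by
    calc b ≤ ‖x‖ + ‖d‖ := norm_add_le x d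
      _ ≤ a + 1 := by linarith
  have h3 : b ^ m ≤ 2 ^ m * (a ^ m + 1) := by
    calc b ^ m ≤ (a + 1) ^ m := pow_le_pow_left₀ hb hble m
      _ ≤ 2 ^ m * (a ^ m + 1) := aux_add_one_pow_le a ha m
  -- Combine
  have hbm : (0:ℝ) ≤ b ^ m := pow_nonneg hb m
  have key : b ^ (m + 2) - a ^ (m + 2) ≤ ((m:ℝ) + 2) * (b ^ m * (⟪x, d⟫ + 1)) := by
    calc b ^ (m + 2) - a ^ (m + 2) ≤ ((m:ℝ) + 2) * b ^ (m + 1) * (b - a) := h1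
      _ = ((m:ℝ) + 2) * (b ^ m * (b * (b - a))) := by ring
      _ ≤ ((m:ℝ) + 2) * (b ^ m * (⟪x, d⟫ + 1)) := by
          apply mul_le_mul_of_nonneg_left _ (by positivity)
          exact mul_le_mul_of_nonneg_left h2 hbm
  have hpos : (0:ℝ) < (m:ℝ) + 2 := by positivity
  have h3' : ((m:ℝ) + 2) * b ^ m ≤ ((m:ℝ) + 2) * (2 ^ m * (a ^ m + 1)) :=
    mul_le_mul_of_nonneg_left h3 hpos.le
  rw [div_mul_eq_mul_div, div_mul_eq_mul_div, div_sub_div_same,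
    div_le_iff₀ (by positivity : (0:ℝ) < ((m+1:ℕ):ℝ) + 1)]
  push_cast
  nlinarith [key, h3']
end

section
/- For any integer n ≥ 1 and x, d ∈ R^J with ‖d‖ ≤ 1: (1/(n+1))‖x − d‖^{n+1} − (1/(n+1))‖x‖^{n+1} ≤ −‖x − d‖^{n−1}⟨x, d⟩ + 2^{n−1}(‖x‖^{n−1} + 1). -/
open scoped RealInnerProductSpace

private lemma conv_pow (m : ℕ) (a b : ℝ) (ha : 0 ≤ a) (hb : 0 ≤ b) :
    a ^ (m + 2) - b ^ (m + 2) ≤ a ^ (m + 1) * (a - b) * ((m : ℝ) + 2) := by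
  rcases ha.eq_or_lt with h | h
  · rw [← h]
    simp
    positivity
  · have ht : (-2 : ℝ) ≤ b / a - 1 := by
      have : 0 ≤ b / a := div_nonneg hb h.le
      linarith
    have hber := one_add_mul_le_pow ht (m + 2)
    have hrw : (1 + (b / a - 1)) ^ (m + 2) = b ^ (m + 2) / a ^ (m + 2) := by
      rw [show 1 + (b / a - 1) = b / a by ring, div_pow]
    rw [hrw] at hber
    have hapos : 0 < a ^ (m + 2) := pow_pos h _
    have hmul := mul_le_mul_of_nonneg_right hber hapos.le
    have hcan : b ^ (m + 2) / a ^ (m + 2) * a ^ (m + 2) = b ^ (m + 2) :=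
      div_mul_cancel₀ _ hapos.ne'
    rw [hcan] at hmul
    push_cast at hmul
    have hl : (1 + ((m : ℝ) + 2) * (b / a - 1)) * a ^ (m + 2)
        = a ^ (m + 2) + ((m : ℝ) + 2) * (a ^ (m + 1) * b - a ^ (m + 2)) := by
      field_simp
      ring
    rw [hl] at hmul
    have hgoal : a ^ (m + 1) * (a - b) * ((m : ℝ) + 2)
        = ((m : ℝ) + 2) * (a ^ (m + 2) - a ^ (m + 1) * b) := by ring
    rw [hgoal]
    linarith

private lemma pow_le_two_pow (m : ℕ) (a b : ℝ) (ha : 0 ≤ a) (hb : 0 ≤ b)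
    (hab : a ≤ b + 1) : a ^ m ≤ 2 ^ m * (b ^ m + 1) := by
  rcases le_total b 1 with h | h
  · have h1 : a ^ m ≤ 2 ^ m := pow_le_pow_left₀ ha (by linarith) m
    have h2 : (0:ℝ) ≤ b ^ m := pow_nonneg hb m
    nlinarith [pow_pos (show (0:ℝ) < 2 by norm_num) m]
  · have h1 : a ^ m ≤ (2 * b) ^ m := pow_le_pow_left₀ ha (by linarith) m
    rw [mul_pow] at h1
    nlinarith [pow_pos (show (0:ℝ) < 2 by norm_num) m, pow_nonneg hb m]

theorem taylor_decrement_bound (J n : ℕ) (hn : 1 ≤ n)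
    (x d : EuclideanSpace ℝ (Fin J)) (hd : ‖d‖ ≤ 1) :
    (1 / (n + 1 : ℝ)) * ‖x - d‖ ^ (n + 1) - (1 / (n + 1 : ℝ)) * ‖x‖ ^ (n + 1)
      ≤ -(‖x - d‖ ^ (n - 1) * ⟪x, d⟫) + 2 ^ (n - 1) * (‖x‖ ^ (n - 1) + 1) := by
  obtain ⟨m, rfl⟩ : ∃ m, n = m + 1 := ⟨n - 1, (Nat.succ_pred_eq_of_pos hn).symm⟩
  simp only [Nat.add_sub_cancel]
  set a := ‖x - d‖ with ha_def
  set b := ‖x‖ with hb_def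
  set c := ⟪x, d⟫ with hc_def
  have ha : 0 ≤ a := norm_nonneg _
  have hb : 0 ≤ b := norm_nonneg _
  have hdn : 0 ≤ ‖d‖ := norm_nonneg _
  have hd2 : ‖d‖ ^ 2 ≤ 1 := by nlinarith
  have hpol : a ^ 2 = b ^ 2 - 2 * c + ‖d‖ ^ 2 := by
    rw [ha_def, hb_def, hc_def]
    exact norm_sub_sq_real x d
  have hab1 : a ≤ b + 1 := by
    calc a ≤ ‖x‖ + ‖d‖ := norm_sub_le x d
    _ ≤ b + 1 := by linarith
  have hab2 : b ≤ a + 1 := by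
    have : ‖x‖ ≤ ‖x - d‖ + ‖d‖ := by
      calc ‖x‖ = ‖x - d + d‖ := by rw [sub_add_cancel]
      _ ≤ ‖x - d‖ + ‖d‖ := norm_add_le _ _
    linarith
  have hconv := conv_pow m a b ha hb
  have hD := pow_le_two_pow m a b ha hb hab1
  have hm : (0:ℝ) ≤ a ^ m := pow_nonneg ha m
  have hsq : (a - b) ^ 2 ≤ 1 := by nlinarith
  -- key step: a^(m+1)*(a-b) + a^m * c ≤ a^m
  have hlin : a * (a - b) + c ≤ 1 := by nlinarith
  have hkey : a ^ (m + 1) * (a - b) + a ^ m * c ≤ a ^ m := by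
    have h1 : a ^ m * (a * (a - b) + c) ≤ a ^ m * 1 :=
      mul_le_mul_of_nonneg_left hlin hm
    have h2 : a ^ (m + 1) * (a - b) + a ^ m * c = a ^ m * (a * (a - b) + c) := by ring
    linarith [h1, h2.le, h2.ge]
  -- divide convexity bound by (m+2)
  have hM : (0:ℝ) < (m : ℝ) + 2 := by positivity
  have hdiv : (1 / ((m : ℝ) + 2)) * (a ^ (m + 2) - b ^ (m + 2)) ≤ a ^ (m + 1) * (a - b) := by
    rw [div_mul_eq_mul_div, div_le_iff₀ hM]
    linarith [hconv]
  have hcast : ((m + 1 : ℕ) : ℝ) + 1 = (m : ℝ) + 2 := by push_cast; ring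
  have hexp : (m + 1) + 1 = m + 2 := rfl
  rw [hcast, hexp]
  have hdistr : (1 / ((m : ℝ) + 2)) * (a ^ (m + 2) - b ^ (m + 2))
      = (1 / ((m : ℝ) + 2)) * a ^ (m + 2) - (1 / ((m : ℝ) + 2)) * b ^ (m + 2) := by ring
  linarith [hdiv, hdistr.le, hdistr.ge, hkey, hD]
end
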